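/- arXiv:1903.04931 — 3 statements merged into one kernel-verified Lean document; each statement's English description precedes it below -/
import Mathlib

section
/- The function N satisfies limsup_{s→+∞} (1/s)·∫₀ˢ N(ζ) dζ = +∞ (in the extended reals); equivalently, for every M ∈ ℝ and every s₀ > 0 there exists s > s₀ with (1/s)·∫₀ˢ N(ζ) dζ > M. -/
open Real Filter

noncomputable def Nfun (s : ℝ) : ℝ := Real.exp (s ^ 2) * Real.cos (Real.pi / 2 * s)

/-!
Look at `s = 4k` with `k ∈ ℕ`. On `[4k - 1, 4k]` the factor `cos(πs/2)` is nonnegative, and on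
`[4k - 1/2, 4k]` it is at least `1/2`, so `∫ 0..4k, N ≥ exp((4k - 1/2)²)/4 - 4k · exp((4k - 1)²)`,
the second term bounding `|∫ 0..4k-1, N|`. Since `(4k - 1/2)² - (4k - 1)² = 4k - 3/4`, the gain
`exp(4k - 3/4)` beats the polynomial losses and the averages `(1/4k) ∫ 0..4k, N` tend to `+∞`.
-/

theorem EReal.limsup_coe_eq_top_of_frequently_lt {α : Type*} {l : Filter α} {f : α → ℝ}
    (h : ∀ M : ℝ, ∃ᶠ x in l, M < f x) : limsup (fun x => (f x : EReal)) l = ⊤ := by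
  refine (EReal.eq_top_iff_forall_lt _).2 fun M => ?_
  calc (M : EReal) < ((M + 1 : ℝ) : EReal) := EReal.coe_lt_coe_iff.2 (lt_add_one M)
    _ ≤ limsup (fun x => (f x : EReal)) l :=
      le_limsup_of_frequently_le' ((h (M + 1)).mono fun _ hx => EReal.coe_le_coe_iff.2 hx.le)

theorem continuous_Nfun : Continuous Nfun := by
  unfold Nfun; fun_prop

theorem abs_Nfun_le_exp_sq {c ζ : ℝ} (h : |ζ| ≤ c) : |Nfun ζ| ≤ exp (c ^ 2) := by
  rw [Nfun, abs_mul, abs_of_pos (exp_pos _)]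
  calc exp (ζ ^ 2) * |cos (π / 2 * ζ)| ≤ exp (ζ ^ 2) * 1 := by gcongr; exact abs_cos_le_one _
    _ ≤ exp (c ^ 2) := by
      rw [mul_one, ← sq_abs ζ]; gcongr

theorem Nfun_four_mul_sub (k : ℕ) (t : ℝ) :
    Nfun (4 * k - t) = exp ((4 * k - t) ^ 2) * cos (π / 2 * t) := by
  have h : π / 2 * (4 * k - t) = -(π / 2 * t) + k * (2 * π) := by ring
  rw [Nfun, h, cos_add_nat_mul_two_pi, cos_neg]

theorem Nfun_nonneg_of_mem_Icc {k : ℕ} {ζ : ℝ} (hζ : ζ ∈ Set.Icc (4 * k - 1 : ℝ) (4 * k)) :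
    0 ≤ Nfun ζ := by
  obtain ⟨t, rfl⟩ : ∃ t, ζ = 4 * k - t := ⟨4 * k - ζ, by ring⟩
  have hπ := pi_pos
  have : 0 ≤ cos (π / 2 * t) :=
    cos_nonneg_of_mem_Icc ⟨by nlinarith [hζ.2], by nlinarith [hζ.1]⟩
  rw [Nfun_four_mul_sub]
  positivity

theorem exp_sq_div_two_le_Nfun {k : ℕ} (hk : 0 < k) {ζ : ℝ}
    (hζ : ζ ∈ Set.Icc (4 * k - 1 / 2 : ℝ) (4 * k)) :
    exp ((4 * k - 1 / 2 : ℝ) ^ 2) / 2 ≤ Nfun ζ := by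
  obtain ⟨t, rfl⟩ : ∃ t, ζ = 4 * k - t := ⟨4 * k - ζ, by ring⟩
  have hk1 : (1 : ℝ) ≤ k := by exact_mod_cast hk
  have ht : 0 ≤ t ∧ t ≤ 1 / 2 := ⟨by linarith [hζ.2], by linarith [hζ.1]⟩
  have hcos : 1 / 2 ≤ cos (π / 2 * t) := by
    have hx : 0 ≤ π / 2 * t ∧ π / 2 * t ≤ 1 := ⟨by nlinarith [pi_pos], by nlinarith [pi_le_four]⟩
    nlinarith [one_sub_sq_div_two_le_cos (x := π / 2 * t)]
  have hexp : exp ((4 * k - 1 / 2 : ℝ) ^ 2) ≤ exp ((4 * k - t) ^ 2) := by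
    gcongr <;> linarith
  rw [Nfun_four_mul_sub, div_eq_mul_one_div]
  exact mul_le_mul hexp hcos (by norm_num) (exp_pos _).le

theorem integral_Nfun_four_mul_ge {k : ℕ} (hk : 0 < k) :
    exp ((4 * k - 1 / 2 : ℝ) ^ 2) / 4 - 4 * k * exp ((4 * k - 1 : ℝ) ^ 2) ≤
      ∫ ζ in (0 : ℝ)..4 * k, Nfun ζ := by
  have hk1 : (1 : ℝ) ≤ k := by exact_mod_cast hk
  have hint (u v : ℝ) : IntervalIntegrable Nfun MeasureTheory.volume u v :=
    continuous_Nfun.intervalIntegrable u v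
  have h_bound : ∀ ζ ∈ Set.uIoc (0 : ℝ) (4 * k - 1), ‖Nfun ζ‖ ≤ exp ((4 * k - 1 : ℝ) ^ 2) := by
    intro ζ hζ
    rw [Set.uIoc_of_le (by linarith)] at hζ
    exact abs_Nfun_le_exp_sq ((abs_of_pos hζ.1).trans_le hζ.2)
  have h_left : -(4 * k * exp ((4 * k - 1 : ℝ) ^ 2)) ≤ ∫ ζ in (0 : ℝ)..4 * k - 1, Nfun ζ := by
    have h := intervalIntegral.norm_integral_le_of_norm_le_const h_bound
    rw [Real.norm_eq_abs, sub_zero, abs_of_nonneg (show (0 : ℝ) ≤ 4 * k - 1 by linarith)] at h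
    nlinarith [abs_le.1 h, exp_pos ((4 * k - 1 : ℝ) ^ 2)]
  have h_mid : 0 ≤ ∫ ζ in (4 * k - 1 : ℝ)..4 * k - 1 / 2, Nfun ζ :=
    intervalIntegral.integral_nonneg (by linarith) fun ζ hζ =>
      Nfun_nonneg_of_mem_Icc ⟨hζ.1, by linarith [hζ.2]⟩
  have h_right :
      exp ((4 * k - 1 / 2 : ℝ) ^ 2) / 4 ≤ ∫ ζ in (4 * k - 1 / 2 : ℝ)..4 * k, Nfun ζ := by
    calc exp ((4 * k - 1 / 2 : ℝ) ^ 2) / 4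
        = ∫ _ in (4 * k - 1 / 2 : ℝ)..4 * k, exp ((4 * k - 1 / 2 : ℝ) ^ 2) / 2 := by
          rw [intervalIntegral.integral_const, smul_eq_mul]; ring
      _ ≤ _ := intervalIntegral.integral_mono_on (by linarith) intervalIntegrable_const (hint _ _)
          fun ζ hζ => exp_sq_div_two_le_Nfun hk hζ
  rw [← intervalIntegral.integral_add_adjacent_intervals (hint 0 (4 * k - 1)) (hint _ (4 * k)),
    ← intervalIntegral.integral_add_adjacent_intervals (hint _ (4 * k - 1 / 2)) (hint _ (4 * k))]
  linarith

theorem exp_sq_mul_le_average_Nfun {k : ℕ} (hk : 0 < k) :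
    exp ((4 * k - 1 : ℝ) ^ 2) * (exp (4 * k - 3 / 4 : ℝ) / (4 * (4 * k)) - 1) ≤
      1 / (4 * k : ℝ) * ∫ ζ in (0 : ℝ)..4 * k, Nfun ζ := by
  have hx : (0 : ℝ) < 4 * k := by positivity
  have h_exp :
      exp ((4 * k - 1 / 2 : ℝ) ^ 2) = exp ((4 * k - 1 : ℝ) ^ 2) * exp (4 * k - 3 / 4 : ℝ) := by
    rw [← exp_add]; ring_nf
  calc exp ((4 * k - 1 : ℝ) ^ 2) * (exp (4 * k - 3 / 4 : ℝ) / (4 * (4 * k)) - 1)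
      = 1 / (4 * k : ℝ) *
          (exp ((4 * k - 1 / 2 : ℝ) ^ 2) / 4 - 4 * k * exp ((4 * k - 1 : ℝ) ^ 2)) := by
        rw [h_exp]; field_simp
    _ ≤ _ := mul_le_mul_of_nonneg_left (integral_Nfun_four_mul_ge hk) (by positivity)

theorem tendsto_exp_sq_mul_exp_div_sub_one :
    Tendsto (fun x : ℝ => exp ((x - 1) ^ 2) * (exp (x - 3 / 4) / (4 * x) - 1)) atTop atTop := by
  have h_sq : Tendsto (fun x : ℝ => exp ((x - 1) ^ 2)) atTop atTop :=
    tendsto_exp_atTop.comp <|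
      (tendsto_pow_atTop two_ne_zero).comp (tendsto_atTop_add_const_right _ (-1) tendsto_id)
  have h_ratio : Tendsto (fun x : ℝ => exp (x - 3 / 4) / (4 * x) - 1) atTop atTop := by
    have h_pos : (0 : ℝ) < exp (-(3 / 4)) / 4 := by positivity
    refine tendsto_atTop_add_const_right _ (-1)
      (((tendsto_exp_div_pow_atTop 1).const_mul_atTop h_pos).congr' ?_)
    filter_upwards [eventually_ne_atTop 0] with x hx
    rw [sub_eq_add_neg, exp_add]; field_simp
  exact h_sq.atTop_mul_atTop₀ h_ratio

theorem tendsto_average_Nfun_four_mul :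
    Tendsto (fun k : ℕ => 1 / (4 * k : ℝ) * ∫ ζ in (0 : ℝ)..4 * k, Nfun ζ) atTop atTop := by
  refine tendsto_atTop_mono' atTop ?_ (tendsto_exp_sq_mul_exp_div_sub_one.comp
    (tendsto_natCast_atTop_atTop.const_mul_atTop four_pos))
  filter_upwards [eventually_gt_atTop 0] with k hk using exp_sq_mul_le_average_Nfun hk

/-- `N` satisfies `limsup_{s→∞} (1/s)∫₀ˢ N(ζ)dζ = +∞` (in the extended reals); equivalently,
for every `M` and every `s₀ > 0` there is `s > s₀` with `(1/s)∫₀ˢ N(ζ)dζ > M`. -/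
theorem nussbaum_property_limsup :
    Filter.limsup (fun s : ℝ => ((1 / s * ∫ ζ in (0:ℝ)..s, Nfun ζ : ℝ) : EReal)) Filter.atTop = ⊤ ∧
    ∀ M : ℝ, ∀ s₀ : ℝ, 0 < s₀ → ∃ s : ℝ, s₀ < s ∧ M < 1 / s * ∫ ζ in (0:ℝ)..s, Nfun ζ := by
  have h_freq (M : ℝ) : ∃ᶠ s in atTop, M < 1 / s * ∫ ζ in (0:ℝ)..s, Nfun ζ :=
    (tendsto_natCast_atTop_atTop.const_mul_atTop four_pos).frequently
      (tendsto_average_Nfun_four_mul.eventually_gt_atTop M).frequently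
  exact ⟨EReal.limsup_coe_eq_top_of_frequently_lt h_freq,
    fun M s₀ _ => frequently_atTop'.1 (h_freq M) s₀⟩
end

section
/- The function N satisfies liminf_{s→+∞} (1/s)·∫₀ˢ N(ζ) dζ = −∞ (in the extended reals); equivalently, for every M ∈ ℝ and every s₀ > 0 there exists s > s₀ with (1/s)·∫₀ˢ N(ζ) dζ < M. -/
/-! Around each centre `c = 4k + 2` the factor `cos (π/2 · ζ)` is `≤ 0` on `[c - 1, c + 1]` and
`≤ -1/2` on `[c, c + 2/3]`, while `exp (ζ²)` there dwarfs everything accumulated on `[0, c - 1]`: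
`exp (c²) = exp ((c-1)²) · exp (2c - 1)`. Hence `∫₀^{c + 2/3} N ≤ -(c - 1)² / 2`, and the
averages `(1/s) ∫₀ˢ N` at `s = 4k + 8/3` are at most `-k`. -/

open Real Filter

theorem intervalIntegral.integral_le_mul_of_le_const {f : ℝ → ℝ} {a b C : ℝ} (hab : a ≤ b)
    (hf : IntervalIntegrable f MeasureTheory.volume a b) (h : ∀ x ∈ Set.Icc a b, f x ≤ C) :
    ∫ x in a..b, f x ≤ (b - a) * C := by
  simpa using intervalIntegral.integral_mono_on hab hf intervalIntegrable_const h

theorem cos_pi_div_two_mul_four_mul_add_two (k : ℤ) (t : ℝ) :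
    cos (π / 2 * (4 * k + 2 + t)) = -cos (π / 2 * t) := by
  rw [show π / 2 * (4 * k + 2 + t) = π / 2 * t + π + k * (2 * π) by ring,
    cos_add_int_mul_two_pi, cos_add_pi]

theorem integral_Nfun_le_mul_exp_sq {a : ℝ} (ha : 0 ≤ a) :
    ∫ ζ in (0:ℝ)..a, Nfun ζ ≤ a * exp (a ^ 2) := by
  refine (Real.le_norm_self _).trans
    ((intervalIntegral.norm_integral_le_of_norm_le_const (C := exp (a ^ 2)) ?_).trans ?_)
  · intro x hx
    rw [Set.uIoc_of_le ha] at hx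
    rw [Nfun, norm_mul, Real.norm_of_nonneg (exp_pos _).le]
    calc exp (x ^ 2) * ‖cos (π / 2 * x)‖ ≤ exp (x ^ 2) * 1 := by
          gcongr; exact abs_cos_le_one _
      _ ≤ exp (a ^ 2) := by rw [mul_one]; gcongr <;> linarith [hx.1, hx.2]
  · rw [sub_zero, abs_of_nonneg ha, mul_comm]

theorem Nfun_nonpos (k : ℤ) {ζ : ℝ} (h₁ : 4 * k + 1 ≤ ζ) (h₂ : ζ ≤ 4 * k + 3) : Nfun ζ ≤ 0 := by
  obtain ⟨t, rfl⟩ : ∃ t, ζ = 4 * k + 2 + t := ⟨ζ - (4 * k + 2), by ring⟩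
  have hcos : 0 ≤ cos (π / 2 * t) :=
    cos_nonneg_of_mem_Icc ⟨by nlinarith [pi_pos], by nlinarith [pi_pos]⟩
  rw [Nfun, cos_pi_div_two_mul_four_mul_add_two]
  nlinarith [exp_pos ((4 * k + 2 + t) ^ 2)]

theorem integral_Nfun_nonpos (k : ℕ) : ∫ ζ in (4 * k + 1 : ℝ)..(4 * k + 2), Nfun ζ ≤ 0 :=
  (intervalIntegral.integral_le_mul_of_le_const (by linarith)
    (continuous_Nfun.intervalIntegrable _ _)
    fun _ hx => Nfun_nonpos k (by exact_mod_cast hx.1) (by push_cast; linarith [hx.2])).trans_eq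
    (mul_zero _)

theorem Nfun_le_neg_half_exp (k : ℕ) {ζ : ℝ} (h₁ : 4 * k + 2 ≤ ζ) (h₂ : ζ ≤ 4 * k + 8 / 3) :
    Nfun ζ ≤ -(exp ((4 * k + 2) ^ 2) / 2) := by
  obtain ⟨t, rfl⟩ : ∃ t, ζ = 4 * k + 2 + t := ⟨ζ - (4 * k + 2), by ring⟩
  have hcos : 1 / 2 ≤ cos (π / 2 * t) := by
    rw [← cos_pi_div_three]
    exact cos_le_cos_of_nonneg_of_le_pi (by nlinarith [pi_pos]) (by linarith [pi_pos])
      (by nlinarith [pi_pos])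
  have hexp : exp ((4 * k + 2) ^ 2) ≤ exp ((4 * k + 2 + t) ^ 2) := by gcongr
  have hshift := cos_pi_div_two_mul_four_mul_add_two k t
  push_cast at hshift
  rw [Nfun, hshift]
  nlinarith [exp_pos ((4 * k + 2) ^ 2)]

theorem integral_Nfun_le_neg_exp (k : ℕ) :
    ∫ ζ in (4 * k + 2 : ℝ)..(4 * k + 8 / 3), Nfun ζ ≤ -(exp ((4 * k + 2) ^ 2) / 3) :=
  (intervalIntegral.integral_le_mul_of_le_const (by linarith)
    (continuous_Nfun.intervalIntegrable _ _)
    fun _ hx => Nfun_le_neg_half_exp k hx.1 hx.2).trans_eq (by ring)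

theorem mul_exp_sq_sub_exp_add_one_sq_le {a : ℝ} (ha : 0 ≤ a) :
    a * exp (a ^ 2) - exp ((a + 1) ^ 2) / 3 ≤ -(a ^ 2 / 2) := by
  have hsplit : exp ((a + 1) ^ 2) = exp (a ^ 2) * exp (2 * a + 1) := by
    rw [← exp_add]; ring_nf
  have hquad := quadratic_le_exp_of_nonneg (by linarith : 0 ≤ 2 * a + 1)
  have hone : 1 ≤ exp (a ^ 2) := one_le_exp (sq_nonneg a)
  -- `exp (2a+1) ≥ 1 + (2a+1) + (2a+1)²/2` leaves a margin of `exp (a²) (4a² + 2a + 5) / 6 ≥ a²/2`.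
  rw [hsplit]
  nlinarith [mul_le_mul_of_nonneg_left hquad (exp_pos (a ^ 2)).le,
    mul_le_mul_of_nonneg_right hone (by nlinarith : 0 ≤ 4 * a ^ 2 + 2 * a + 5)]

theorem integral_Nfun_le_neg_sq (k : ℕ) :
    ∫ ζ in (0:ℝ)..(4 * k + 8 / 3), Nfun ζ ≤ -((4 * k + 1) ^ 2 / 2) := by
  have hf := fun a b => continuous_Nfun.intervalIntegrable (μ := MeasureTheory.volume) a b
  rw [← intervalIntegral.integral_add_adjacent_intervals (hf 0 (4 * k + 1)) (hf _ _),
    ← intervalIntegral.integral_add_adjacent_intervals (hf (4 * k + 1) (4 * k + 2)) (hf _ _)]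
  have hfirst := integral_Nfun_le_mul_exp_sq (a := 4 * k + 1) (by positivity)
  have hlast := mul_exp_sq_sub_exp_add_one_sq_le (a := 4 * k + 1) (by positivity)
  rw [show (4 * k + 1 + 1 : ℝ) = 4 * k + 2 by ring] at hlast
  linarith [integral_Nfun_nonpos k, integral_Nfun_le_neg_exp k]

theorem average_integral_Nfun_le (k : ℕ) :
    1 / (4 * k + 8 / 3) * ∫ ζ in (0:ℝ)..(4 * k + 8 / 3), Nfun ζ ≤ -k := by
  rw [one_div, inv_mul_le_iff₀ (by positivity)]
  nlinarith [integral_Nfun_le_neg_sq k]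

theorem frequently_average_integral_Nfun_lt (M : ℝ) :
    ∃ᶠ s in atTop, 1 / s * ∫ ζ in (0:ℝ)..s, Nfun ζ < M := by
  refine frequently_atTop.2 fun b => ?_
  obtain ⟨k, hk⟩ := exists_nat_ge (max b (1 - M))
  exact ⟨4 * k + 8 / 3, by linarith [le_max_left b (1 - M)],
    (average_integral_Nfun_le k).trans_lt (by linarith [le_max_right b (1 - M)])⟩

/-- `N` satisfies `liminf_{s→∞} (1/s)∫₀ˢ N(ζ)dζ = −∞` (in the extended reals); equivalently,
for every `M` and every `s₀ > 0` there is `s > s₀` with `(1/s)∫₀ˢ N(ζ)dζ < M`. -/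
theorem nussbaum_property_liminf :
    Filter.liminf (fun s : ℝ => ((1 / s * ∫ ζ in (0:ℝ)..s, Nfun ζ : ℝ) : EReal)) Filter.atTop = ⊥ ∧
    ∀ M : ℝ, ∀ s₀ : ℝ, 0 < s₀ → ∃ s : ℝ, s₀ < s ∧ 1 / s * (∫ ζ in (0:ℝ)..s, Nfun ζ) < M := by
  refine ⟨(EReal.eq_bot_iff_forall_lt _).2 fun M => ?_, fun M s₀ _ => ?_⟩
  · refine lt_of_le_of_lt (liminf_le_of_frequently_le' ?_) (EReal.coe_lt_coe_iff.2 (sub_one_lt M))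
    exact (frequently_average_integral_Nfun_lt (M - 1)).mono fun s hs => EReal.coe_le_coe_iff.2 hs.le
  · exact ((frequently_average_integral_Nfun_lt M).and_eventually (eventually_gt_atTop s₀)).exists.imp
      fun s hs => ⟨hs.2, hs.1⟩
end

section
/- Let p, q, l, α₁, k be positive real constants. Define, for ε₀ > 0 and ε > 0, β(ε₀) = 1/ε₀ − 1 − 2·p·l·‖D(ε₀)‖ − p², α(ε₀) = p·α₁/ε₀ + q·l·‖D(ε₀)‖, where ‖D(ε₀)‖ = max(ε₀², ε₀, 1) is the norm of the diagonal matrix D(ε₀) = diag(ε₀², ε₀, 1), and let Q(ε₀, ε) be the 3×3 symmetric matrix with rows (β(ε₀), −α(ε₀), 0), (−α(ε₀), 1/ε − 1, 0), (0, 0, k). Then there exists ε₀* > 0 such that for every ε₀ ∈ (0, ε₀*) there exists ε* > 0 such that for every ε ∈ (0, ε*), the matrix Q(ε₀, ε) is positive definite (in particular λ_min(Q) > 0). -/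
/-!
As `ε₀ → 0⁺` the entry `β(ε₀)` grows like `1/ε₀` while everything else subtracted from it stays
bounded, so `β(ε₀) > 0` for small `ε₀`. For such a fixed `ε₀`, the entry `1/ε - 1` tends to `+∞`
as `ε → 0⁺`, so eventually `α(ε₀)² < β(ε₀) (1/ε - 1)`. Then the leading 2×2 block is positive
definite (positive corner entry and determinant), and the third coordinate decouples with
weight `k > 0`.
-/

open Filter Matrix Topology

lemma binary_quadratic_pos {a b c x y : ℝ} (ha : 0 < a) (hdisc : b ^ 2 < a * c)
    (hxy : x ≠ 0 ∨ y ≠ 0) : 0 < a * x ^ 2 + 2 * b * x * y + c * y ^ 2 := by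
  have hsq : a * (a * x ^ 2 + 2 * b * x * y + c * y ^ 2) =
      (a * x + b * y) ^ 2 + (a * c - b ^ 2) * y ^ 2 := by
    ring
  rcases eq_or_ne y 0 with rfl | hy
  · have hx : x ≠ 0 := hxy.resolve_right (not_not.2 rfl)
    have : 0 < x ^ 2 := by positivity
    simpa using mul_pos ha this
  · refine pos_of_mul_pos_right ?_ ha.le
    rw [hsq]
    have : 0 < (a * c - b ^ 2) * y ^ 2 := mul_pos (by linarith) (by positivity)
    positivity

lemma posDef_of_sq_lt_mul {a b c k : ℝ} (ha : 0 < a) (hk : 0 < k) (hdisc : b ^ 2 < a * c) :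
    (!![a, b, 0; b, c, 0; 0, 0, k] : Matrix (Fin 3) (Fin 3) ℝ).PosDef := by
  refine .of_dotProduct_mulVec_pos ?_ fun x hx => ?_
  · ext i j
    fin_cases i <;> fin_cases j <;> rfl
  · have hform : star x ⬝ᵥ (!![a, b, 0; b, c, 0; 0, 0, k] *ᵥ x) =
        (a * x 0 ^ 2 + 2 * b * x 0 * x 1 + c * x 1 ^ 2) + k * x 2 ^ 2 := by
      simp [mulVec, dotProduct, Fin.sum_univ_three]
      ring
    rw [hform]
    by_cases h01 : x 0 = 0 ∧ x 1 = 0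
    · have h2 : x 2 ≠ 0 := fun h2 => hx (by ext i; fin_cases i <;> simp [h01, h2])
      have : 0 < k * x 2 ^ 2 := by positivity
      simpa [h01] using this
    · have := binary_quadratic_pos ha hdisc (not_and_or.1 h01)
      positivity

lemma eventually_lt_one_div_nhdsGT_zero {g : ℝ → ℝ} (hg : ContinuousAt g 0) :
    ∀ᶠ x in 𝓝[>] 0, g x < 1 / x := by
  have hbdd : ∀ᶠ x in 𝓝[>] 0, g x < g 0 + 1 :=
    nhdsWithin_le_nhds (hg.eventually_lt continuousAt_const (lt_add_one _))
  filter_upwards [hbdd, tendsto_inv_nhdsGT_zero.eventually_gt_atTop (g 0 + 1)] with x hgx hx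
  rw [one_div]
  linarith

lemma eventually_lt_mul_one_div_sub_one {b : ℝ} (hb : 0 < b) (m : ℝ) :
    ∀ᶠ ε in 𝓝[>] 0, m < b * (1 / ε - 1) := by
  filter_upwards [eventually_lt_one_div_nhdsGT_zero (continuousAt_const (y := m / b + 1))]
    with ε hε
  exact (div_lt_iff₀' hb).1 (by linarith)

theorem Q_posdef_for_small_gains_general (p q l α₁ k : ℝ) (hk : 0 < k) :
    ∃ ε₀star > (0:ℝ), ∀ ε₀ ∈ Set.Ioo (0:ℝ) ε₀star, ∃ εstar > (0:ℝ), ∀ ε ∈ Set.Ioo (0:ℝ) εstar,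
      (!![1 / ε₀ - 1 - 2 * p * l * max (ε₀ ^ 2) (max ε₀ 1) - p ^ 2,
            -(p * α₁ / ε₀ + q * l * max (ε₀ ^ 2) (max ε₀ 1)), 0;
          -(p * α₁ / ε₀ + q * l * max (ε₀ ^ 2) (max ε₀ 1)), 1 / ε - 1, 0;
          0, 0, k] : Matrix (Fin 3) (Fin 3) ℝ).PosDef := by
  have hβ : ∀ᶠ ε₀ in 𝓝[>] 0, 0 < 1 / ε₀ - 1 - 2 * p * l * max (ε₀ ^ 2) (max ε₀ 1) - p ^ 2 := by
    filter_upwards [eventually_lt_one_div_nhdsGT_zero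
      (g := fun x => 1 + 2 * p * l * max (x ^ 2) (max x 1) + p ^ 2) (by fun_prop)] with ε₀ h
    linarith
  obtain ⟨ε₀star, hε₀star, hβ⟩ := mem_nhdsGT_iff_exists_Ioo_subset.1 hβ
  refine ⟨ε₀star, hε₀star, fun ε₀ hε₀ => ?_⟩
  obtain ⟨εstar, hεstar, hdisc⟩ := mem_nhdsGT_iff_exists_Ioo_subset.1
    (eventually_lt_mul_one_div_sub_one (hβ hε₀)
      ((p * α₁ / ε₀ + q * l * max (ε₀ ^ 2) (max ε₀ 1)) ^ 2))
  refine ⟨εstar, hεstar, fun ε hε => posDef_of_sq_lt_mul (hβ hε₀) hk ?_⟩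
  rw [neg_sq]
  exact hdisc hε

/-- For sufficiently small high-gain parameters `ε₀` and `ε`, the matrix `Q` appearing in the
Lyapunov derivative bound `V̇_c ≤ −XᵀQX + Ξ + (𝒳̇/γ_x)(∂g/∂u·N(𝒳) − 1)` is positive definite.
Here `β(ε₀) = 1/ε₀ − 1 − 2pl‖D(ε₀)‖ − p²`, `α(ε₀) = pα₁/ε₀ + ql‖D(ε₀)‖`, and
`‖D(ε₀)‖ = max(ε₀², ε₀, 1)`. -/
theorem Q_posdef_for_small_gains (p q l α₁ k : ℝ)
    (hp : 0 < p) (hq : 0 < q) (hl : 0 < l) (hα₁ : 0 < α₁) (hk : 0 < k) :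
    ∃ ε₀star > (0:ℝ), ∀ ε₀ ∈ Set.Ioo (0:ℝ) ε₀star, ∃ εstar > (0:ℝ), ∀ ε ∈ Set.Ioo (0:ℝ) εstar,
      (!![1 / ε₀ - 1 - 2 * p * l * max (ε₀ ^ 2) (max ε₀ 1) - p ^ 2,
            -(p * α₁ / ε₀ + q * l * max (ε₀ ^ 2) (max ε₀ 1)), 0;
          -(p * α₁ / ε₀ + q * l * max (ε₀ ^ 2) (max ε₀ 1)), 1 / ε - 1, 0;
          0, 0, k] : Matrix (Fin 3) (Fin 3) ℝ).PosDef :=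
  Q_posdef_for_small_gains_general p q l α₁ k hk
end
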